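/- Let 0 ≤ n < m and let G be the digraph with adjacency matrix M_{m,n} with parameter values w, x, y, z ∈ {0,1}. Then: vertices with index in {1,…,2^(m−1)} have tally (2^(m−1) + 2^(n−1)y + 2^(n−1)z − 1, 2^(m−1) + 2^(n−1)w + 2^(n−1)x); vertices with index in {2^(m−1)+1,…,2^m} have tally (2^(m−1) + 2^(n−1)y + 2^(n−1)z, 2^(m−1) + 2^(n−1)w + 2^(n−1)x − 1); vertices with index in {2^m+1,…,2^m+2^(n−1)} have tally (2^(n−1) + 2^(m−1)w + 2^(m−1)x − 1, 2^(n−1) + 2^(m−1)y + 2^(m−1)z); and vertices with index in {2^m+2^(n−1)+1,…,2^m+2^n} have tally (2^(n−1) + 2^(m−1)w + 2^(m−1)x, 2^(n−1) + 2^(m−1)y + 2^(m−1)z − 1). (Assume n ≥ 1.) -/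

import Mathlib

open scoped Classical

/-- For a nonzero integer `z`, `oddPart z` is `z` divided by the largest power of 2 dividing `z`. -/
def oddPart (z : ℤ) : ℤ := z / 2 ^ (z.natAbs.factorization 2)

/-- `i` dominates `j` iff `odd (j - i) ≡ 1 (mod 4)`. -/
def Dominates (i j : ℤ) : Prop := oddPart (j - i) ≡ 1 [ZMOD 4]

/-- The edge relation, on vertices `{1, …, 2^m + 2^n}`, of the digraph whose adjacency
matrix is `M_{m,n}` with parameter values `w, x, y, z ∈ {0,1}`:  the two diagonal blocks
are the tournaments `T m` and `T n`, the top-right block alternates `w`/`x` and the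
bottom-left block alternates `y`/`z` according to the parity of `i + j`. -/
def stockEdge (m n w x y z : ℕ) (i j : ℤ) : Prop :=
  if i ≤ 2 ^ m ∧ j ≤ 2 ^ m then Dominates i j
  else if 2 ^ m < i ∧ 2 ^ m < j then Dominates i j
  else if i ≤ 2 ^ m then (if Even (i + j) then w = 1 else x = 1)
  else (if Even (i + j) then y = 1 else z = 1)

/-- In-degree of the vertex `v` in the digraph with adjacency matrix `M_{m,n}`. -/
noncomputable def sIn (m n w x y z : ℕ) (v : ℤ) : ℕ :=
  ((Finset.Icc (1 : ℤ) (2 ^ m + 2 ^ n)).filter (fun u => stockEdge m n w x y z u v)).card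

/-- Out-degree of the vertex `v` in the digraph with adjacency matrix `M_{m,n}`. -/
noncomputable def sOut (m n w x y z : ℕ) (v : ℤ) : ℕ :=
  ((Finset.Icc (1 : ℤ) (2 ^ m + 2 ^ n)).filter (fun u => stockEdge m n w x y z v u)).card

/-- The tally (in-degree, out-degree) of `v` in the digraph with adjacency matrix `M_{m,n}`. -/
noncomputable def sTally (m n w x y z : ℕ) (v : ℤ) : ℕ × ℕ :=
  (sIn m n w x y z v, sOut m n w x y z v)


/-!
The diagonal blocks of `M_{m,n}` are the tournaments `T k` on `{1, …, 2 ^ k}` with `i → j` iff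
`odd (j - i) ≡ 1 (mod 4)`, and an off-diagonal block contributes `2 ^ (k - 1) * (w + x)` (or
`y + z`) to each degree, because the parity of `i + j` alternates along a row.

In `T (k + 1)` the out-degree of `v` counts the `d ∈ (-v, 2 ^ (k + 1) - v]` with
`odd d ≡ 1 (mod 4)`. Moving from `v` to `v + 1` trades `d = -v` for `d = 2 ^ (k + 1) - v`, whose
odd parts agree mod 4 unless `v = 2 ^ k`; so the out-degree is constant on each half of the
vertex set and drops by one after `2 ^ k`. The reflection `u ↦ 2 ^ (k + 1) + 1 - u` exchanges in-
and out-degrees, and they add up to `2 ^ (k + 1) - 1`, which pins the constant down to `2 ^ k`.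
-/

open Finset

lemma oddPart_two_pow_mul (k : ℕ) {e : ℤ} (he : Odd e) : oddPart (2 ^ k * e) = e := by
  have he0 : e.natAbs ≠ 0 := Int.natAbs_ne_zero.mpr (by rintro rfl; simp at he)
  have hfac : (2 ^ k * e).natAbs.factorization 2 = k := by
    rw [Int.natAbs_mul, Int.natAbs_pow, show (2 : ℤ).natAbs = 2 from rfl,
      Nat.factorization_mul (by positivity) he0, Finsupp.add_apply,
      Nat.prime_two.factorization_pow, Finsupp.single_eq_same,
      Nat.factorization_eq_zero_of_not_dvd (Int.natAbs_odd.mpr he).not_two_dvd_nat, add_zero]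
  rw [oddPart, hfac, Int.mul_ediv_cancel_left _ (by positivity)]

lemma Int.exists_eq_two_pow_mul_odd {d : ℤ} (hd : d ≠ 0) : ∃ k e, Odd e ∧ d = 2 ^ k * e := by
  obtain ⟨k, e, he, hde⟩ := Nat.exists_eq_two_pow_mul_odd (Int.natAbs_ne_zero.mpr hd)
  rcases Int.natAbs_eq d with h | h
  · exact ⟨k, e, by exact_mod_cast he.natCast, by rw [h, hde]; push_cast; ring⟩
  · exact ⟨k, -e, by exact_mod_cast he.natCast.neg, by rw [h, hde]; push_cast; ring⟩

lemma oddPart_neg_modEq_one_iff {d : ℤ} (hd : d ≠ 0) :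
    oddPart (-d) ≡ 1 [ZMOD 4] ↔ ¬ oddPart d ≡ 1 [ZMOD 4] := by
  obtain ⟨k, e, he, rfl⟩ := Int.exists_eq_two_pow_mul_odd hd
  rw [← mul_neg, oddPart_two_pow_mul k he.neg, oddPart_two_pow_mul k he, Int.ModEq, Int.ModEq]
  obtain ⟨t, rfl⟩ := he
  omega

/-- Unless `d = 2 ^ k`, four times the 2-part of `d` divides `2 ^ (k + 1)`. -/
lemma oddPart_sub_two_pow_modEq_one_iff {k : ℕ} {d : ℤ} (hd0 : 0 < d) (hdk : d < 2 ^ (k + 1))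
    (hne : d ≠ 2 ^ k) : oddPart (d - 2 ^ (k + 1)) ≡ 1 [ZMOD 4] ↔ oddPart d ≡ 1 [ZMOD 4] := by
  obtain ⟨j, e, he, rfl⟩ := Int.exists_eq_two_pow_mul_odd hd0.ne'
  have he0 : 0 < e := pos_of_mul_pos_right hd0 (by positivity)
  have hjk : j + 2 ≤ k + 1 := by
    by_contra! hkj
    rcases Nat.lt_or_ge j (k + 1) with hj | hj
    · obtain rfl : j = k := by omega
      have : e < 2 := lt_of_mul_lt_mul_left (by rwa [pow_succ] at hdk) (by positivity)
      exact hne (by rw [show e = 1 by obtain ⟨t, rfl⟩ := he; omega, mul_one])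
    · have := pow_le_pow_right₀ (by norm_num : (1 : ℤ) ≤ 2) hj
      nlinarith
  obtain ⟨r, hr⟩ := Nat.exists_eq_add_of_le hjk
  have hsub : 2 ^ j * e - 2 ^ (k + 1) = 2 ^ j * (e - 4 * 2 ^ r) := by
    rw [hr, pow_add, pow_add]; ring
  rw [hsub, oddPart_two_pow_mul j he, oddPart_two_pow_mul j (he.sub_even ⟨2 * 2 ^ r, by ring⟩),
    Int.ModEq, Int.ModEq]
  omega

section IntervalCount

variable (p : ℤ → Prop) [DecidablePred p]

lemma card_filter_Ioc_add_card_filter_Ioc {a b c : ℤ} (hab : a ≤ b) (hbc : b ≤ c) :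
    #{u ∈ Ioc a b | p u} + #{u ∈ Ioc b c | p u} = #{u ∈ Ioc a c | p u} := by
  rw [← card_union_of_disjoint (disjoint_filter_filter (Ioc_disjoint_Ioc_of_le le_rfl)),
    ← filter_union, Ioc_union_Ioc_eq_Ioc hab hbc]

lemma card_filter_Ioc_add_right (a b c : ℤ) :
    #{u ∈ Ioc (a + c) (b + c) | p u} = #{u ∈ Ioc a b | p (u + c)} := by
  rw [← map_add_right_Ioc, filter_map, card_map]
  rfl

lemma card_filter_Ioc_of_eq_add_one {b c : ℤ} (hc : c = b + 1) :
    #{u ∈ Ioc b c | p u} = if p c then 1 else 0 := by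
  rw [show Ioc b c = {c} by ext; simp only [mem_Ioc, mem_singleton]; omega, filter_singleton]
  split_ifs <;> rfl

lemma card_filter_Icc_one_add {a b : ℤ} (ha : 0 ≤ a) (hb : 0 ≤ b) :
    #{u ∈ Icc 1 (a + b) | p u} = #{u ∈ Ioc 0 a | p u} + #{u ∈ Ioc a (a + b) | p u} := by
  rw [← zero_add 1, Icc_add_one_left_eq_Ioc, card_filter_Ioc_add_card_filter_Ioc _ ha (by omega)]

end IntervalCount

lemma card_filter_Ioc_ite_even {w x : ℕ} (hw : w ≤ 1) (hx : x ≤ 1) (a v : ℤ) (L : ℕ) :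
    #{u ∈ Ioc a (a + 2 * L) | if Even (u + v) then w = 1 else x = 1} = L * w + L * x := by
  induction L with
  | zero => simp
  | succ L ih =>
    set b := a + 2 * (L : ℤ)
    rw [← card_filter_Ioc_add_card_filter_Ioc _ (show a ≤ b by omega) (by push_cast; omega), ih,
      show a + 2 * ((L + 1 : ℕ) : ℤ) = b + 1 + 1 by push_cast; ring,
      ← card_filter_Ioc_add_card_filter_Ioc _ (show b ≤ b + 1 by omega) (by omega),
      card_filter_Ioc_of_eq_add_one _ rfl, card_filter_Ioc_of_eq_add_one _ rfl]
    have hparity : Even (b + 1 + 1 + v) ↔ ¬ Even (b + 1 + v) := by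
      rw [add_right_comm, Int.even_add_one]
    by_cases h : Even (b + 1 + v) <;> interval_cases w <;> interval_cases x <;>
      simp [h, hparity] <;> ring

lemma card_filter_Ioc_two_pow_ite_even {l : ℕ} {a b : ℤ} (hab : b = a + 2 ^ (l + 1)) (v : ℤ)
    {w x : ℕ} (hw : w ≤ 1) (hx : x ≤ 1) :
    #{u ∈ Ioc a b | if Even (u + v) then w = 1 else x = 1} = 2 ^ l * w + 2 ^ l * x := by
  rw [← card_filter_Ioc_ite_even hw hx a v (2 ^ l), hab, Nat.cast_pow, Nat.cast_ofNat, ← pow_succ']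

lemma not_dominates_self (v : ℤ) : ¬ Dominates v v := by
  simp [Dominates, oddPart, Int.ModEq]

lemma dominates_iff_not_dominates {u v : ℤ} (h : u ≠ v) : Dominates u v ↔ ¬ Dominates v u := by
  rw [Dominates, Dominates, ← neg_sub, oddPart_neg_modEq_one_iff (sub_ne_zero.mpr h)]

lemma dominates_add_right_iff (c : ℤ) {i j : ℤ} : Dominates (i + c) (j + c) ↔ Dominates i j := by
  rw [Dominates, Dominates, add_sub_add_right_eq_sub]

section Tournament

variable (k : ℕ)

noncomputable def tournamentOutDegree (v : ℤ) : ℕ := #{u ∈ Ioc 0 (2 ^ (k + 1)) | Dominates v u}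

noncomputable def tournamentInDegree (v : ℤ) : ℕ := #{u ∈ Ioc 0 (2 ^ (k + 1)) | Dominates u v}

lemma tournamentOutDegree_eq_card_window (v : ℤ) :
    tournamentOutDegree k v = #{d ∈ Ioc (-v) (2 ^ (k + 1) - v) | oddPart d ≡ 1 [ZMOD 4]} := by
  have h := card_filter_Ioc_add_right (oddPart · ≡ 1 [ZMOD 4]) 0 (2 ^ (k + 1)) (-v)
  simp only [← sub_eq_add_neg, zero_sub] at h
  rw [h, tournamentOutDegree]
  congr

lemma tournamentOutDegree_succ {v : ℤ} (hv : 1 ≤ v) (hvk : v < 2 ^ (k + 1)) :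
    tournamentOutDegree k (v + 1) + (if v = 2 ^ k then 1 else 0) = tournamentOutDegree k v := by
  have hleft := card_filter_Ioc_add_card_filter_Ioc (oddPart · ≡ 1 [ZMOD 4])
    (show -(v + 1) ≤ -v by omega) (show -v ≤ 2 ^ (k + 1) - v by omega)
  have hright := card_filter_Ioc_add_card_filter_Ioc (oddPart · ≡ 1 [ZMOD 4])
    (show -(v + 1) ≤ 2 ^ (k + 1) - (v + 1) by omega)
    (show 2 ^ (k + 1) - (v + 1) ≤ 2 ^ (k + 1) - v by omega)
  rw [card_filter_Ioc_of_eq_add_one _ (by ring)] at hleft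
  rw [card_filter_Ioc_of_eq_add_one (b := 2 ^ (k + 1) - (v + 1)) _ (by ring)] at hright
  rw [tournamentOutDegree_eq_card_window, tournamentOutDegree_eq_card_window]
  by_cases hvH : v = 2 ^ k
  · have hpos : oddPart (2 ^ (k + 1) - v) ≡ 1 [ZMOD 4] := by
      rw [hvH, pow_succ, ← mul_sub_one, show (2 : ℤ) - 1 = 1 by norm_num,
        oddPart_two_pow_mul k odd_one]
    have hneg : ¬ oddPart (-v) ≡ 1 [ZMOD 4] := by
      rw [oddPart_neg_modEq_one_iff (by positivity), not_not, hvH, ← mul_one (2 ^ k),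
        oddPart_two_pow_mul k odd_one]
    simp only [hpos, hneg, if_true, if_false] at hleft hright
    rw [if_pos hvH]
    omega
  · have hsame := oddPart_sub_two_pow_modEq_one_iff (k := k) (d := 2 ^ (k + 1) - v) (by omega)
      (by omega) (by rw [pow_succ] at hvk ⊢; omega)
    rw [sub_sub_cancel_left] at hsame
    simp only [hsame, hvH, if_false] at hleft hright ⊢
    omega

lemma tournamentOutDegree_add_ite {v : ℤ} (hv : 1 ≤ v) (hvk : v ≤ 2 ^ (k + 1)) :
    tournamentOutDegree k v + (if 2 ^ k < v then 1 else 0) = tournamentOutDegree k 1 := by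
  induction v, hv using Int.leInduction with
  | base => rw [if_neg (not_lt.mpr (one_le_pow₀ one_le_two)), add_zero]
  | succ v hv ih =>
    rw [← ih (by omega), ← tournamentOutDegree_succ k hv (by omega)]
    split_ifs <;> omega

lemma tournamentInDegree_eq_outDegree (v : ℤ) :
    tournamentInDegree k v = tournamentOutDegree k (2 ^ (k + 1) + 1 - v) := by
  refine card_nbij' (2 ^ (k + 1) + 1 - ·) (2 ^ (k + 1) + 1 - ·) ?_ ?_
    (fun u _ => sub_sub_cancel _ u) (fun u _ => sub_sub_cancel _ u)
  all_goals
    intro u hu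
    rw [mem_coe, mem_filter, mem_Ioc] at hu ⊢
    beta_reduce
    refine ⟨by omega, ?_⟩
    unfold Dominates at hu ⊢
    convert hu.2 using 2
    ring

lemma tournamentOutDegree_add_inDegree {v : ℤ} (hv : v ∈ Ioc 0 (2 ^ (k + 1))) :
    tournamentOutDegree k v + tournamentInDegree k v + 1 = 2 ^ (k + 1) := by
  have hnot : {u ∈ Ioc 0 (2 ^ (k + 1)) | ¬ Dominates v u}
      = insert v {u ∈ Ioc 0 (2 ^ (k + 1)) | Dominates u v} := by
    ext u
    rcases eq_or_ne u v with rfl | huv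
    · simp [hv, not_dominates_self]
    · simp [huv, dominates_iff_not_dominates huv]
  have hcard := card_filter_add_card_filter_not (s := Ioc 0 (2 ^ (k + 1))) (Dominates v ·)
  rw [hnot, card_insert_of_notMem (by simp [not_dominates_self])] at hcard
  rw [tournamentOutDegree, tournamentInDegree, add_assoc, hcard, Int.card_Ioc, sub_zero]
  exact_mod_cast Int.toNat_natCast _

lemma tournamentOutDegree_one : tournamentOutDegree k 1 = 2 ^ k := by
  have hk : (2 : ℤ) ^ (k + 1) = 2 * 2 ^ k := pow_succ' 2 k
  have hk1 : (1 : ℤ) ≤ 2 ^ k := one_le_pow₀ one_le_two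
  have hsum := tournamentOutDegree_add_inDegree k (v := 1) (by rw [mem_Ioc]; omega)
  have hlast := tournamentOutDegree_add_ite k (v := 2 ^ (k + 1)) (by omega) le_rfl
  rw [tournamentInDegree_eq_outDegree, add_sub_cancel_right, Nat.pow_succ'] at hsum
  rw [if_pos (by omega)] at hlast
  omega

lemma tournamentOutDegree_eq {v : ℤ} (hv : v ∈ Ioc 0 (2 ^ (k + 1))) :
    tournamentOutDegree k v = if v ≤ 2 ^ k then 2 ^ k else 2 ^ k - 1 := by
  rw [mem_Ioc] at hv
  have h := tournamentOutDegree_add_ite k (v := v) (by omega) hv.2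
  rw [tournamentOutDegree_one] at h
  split_ifs at h ⊢ <;> omega

lemma tournamentInDegree_eq {v : ℤ} (hv : v ∈ Ioc 0 (2 ^ (k + 1))) :
    tournamentInDegree k v = if v ≤ 2 ^ k then 2 ^ k - 1 else 2 ^ k := by
  have hk : (2 : ℤ) ^ (k + 1) = 2 * 2 ^ k := pow_succ' 2 k
  rw [mem_Ioc] at hv
  rw [tournamentInDegree_eq_outDegree, tournamentOutDegree_eq k (by rw [mem_Ioc]; omega)]
  split_ifs <;> omega

end Tournament

section StockEdge

variable {m n w x y z : ℕ} {i j : ℤ}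

lemma stockEdge_of_le_of_le (hi : i ≤ 2 ^ m) (hj : j ≤ 2 ^ m) :
    stockEdge m n w x y z i j ↔ Dominates i j := by
  simp [stockEdge, hi, hj]

lemma stockEdge_of_lt_of_lt (hi : 2 ^ m < i) (hj : 2 ^ m < j) :
    stockEdge m n w x y z i j ↔ Dominates i j := by
  simp [stockEdge, hi, hj, hi.not_ge]

lemma stockEdge_of_le_of_lt (hi : i ≤ 2 ^ m) (hj : 2 ^ m < j) :
    stockEdge m n w x y z i j ↔ if Even (i + j) then w = 1 else x = 1 := by
  simp [stockEdge, hi, hj.not_ge]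

lemma stockEdge_of_lt_of_le (hi : 2 ^ m < i) (hj : j ≤ 2 ^ m) :
    stockEdge m n w x y z i j ↔ if Even (i + j) then y = 1 else z = 1 := by
  simp [stockEdge, hi.not_ge, hj.not_gt]

end StockEdge

section Degrees

variable {k l w x y z : ℕ}

lemma sIn_of_mem_low (hy : y ≤ 1) (hz : z ≤ 1) {v : ℤ} (hv : v ∈ Ioc 0 (2 ^ (k + 1))) :
    sIn (k + 1) (l + 1) w x y z v = tournamentInDegree k v + (2 ^ l * y + 2 ^ l * z) := by
  rw [mem_Ioc] at hv
  rw [sIn, card_filter_Icc_one_add _ (by positivity) (by positivity),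
    ← card_filter_Ioc_two_pow_ite_even rfl v hy hz, tournamentInDegree]
  congr 2 <;> refine filter_congr fun u hu => ?_ <;> rw [mem_Ioc] at hu
  · exact stockEdge_of_le_of_le hu.2 hv.2
  · exact stockEdge_of_lt_of_le hu.1 hv.2

lemma sOut_of_mem_low (hw : w ≤ 1) (hx : x ≤ 1) {v : ℤ} (hv : v ∈ Ioc 0 (2 ^ (k + 1))) :
    sOut (k + 1) (l + 1) w x y z v = tournamentOutDegree k v + (2 ^ l * w + 2 ^ l * x) := by
  rw [mem_Ioc] at hv
  rw [sOut, card_filter_Icc_one_add _ (by positivity) (by positivity),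
    ← card_filter_Ioc_two_pow_ite_even rfl v hw hx, tournamentOutDegree]
  congr 2 <;> refine filter_congr fun u hu => ?_ <;> rw [mem_Ioc] at hu
  · exact stockEdge_of_le_of_le hv.2 hu.2
  · rw [stockEdge_of_le_of_lt hv.2 hu.1, add_comm]

lemma sIn_of_mem_high (hw : w ≤ 1) (hx : x ≤ 1) {v : ℤ}
    (hv : v ∈ Ioc (2 ^ (k + 1)) (2 ^ (k + 1) + 2 ^ (l + 1))) :
    sIn (k + 1) (l + 1) w x y z v
      = 2 ^ k * w + 2 ^ k * x + tournamentInDegree l (v - 2 ^ (k + 1)) := by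
  rw [mem_Ioc] at hv
  have hshift := card_filter_Ioc_add_right (stockEdge (k + 1) (l + 1) w x y z · v) 0
    (2 ^ (l + 1)) (2 ^ (k + 1))
  rw [zero_add, add_comm (2 ^ (l + 1) : ℤ)] at hshift
  rw [sIn, card_filter_Icc_one_add _ (by positivity) (by positivity), hshift,
    ← card_filter_Ioc_two_pow_ite_even (zero_add _).symm v hw hx, tournamentInDegree]
  congr 2 <;> refine filter_congr fun u hu => ?_ <;> rw [mem_Ioc] at hu
  · exact stockEdge_of_le_of_lt hu.2 hv.1
  · rw [stockEdge_of_lt_of_lt (by omega) hv.1, ← dominates_add_right_iff (2 ^ (k + 1)) (i := u),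
      sub_add_cancel]

lemma sOut_of_mem_high (hy : y ≤ 1) (hz : z ≤ 1) {v : ℤ}
    (hv : v ∈ Ioc (2 ^ (k + 1)) (2 ^ (k + 1) + 2 ^ (l + 1))) :
    sOut (k + 1) (l + 1) w x y z v
      = 2 ^ k * y + 2 ^ k * z + tournamentOutDegree l (v - 2 ^ (k + 1)) := by
  rw [mem_Ioc] at hv
  have hshift := card_filter_Ioc_add_right (stockEdge (k + 1) (l + 1) w x y z v ·) 0
    (2 ^ (l + 1)) (2 ^ (k + 1))
  rw [zero_add, add_comm (2 ^ (l + 1) : ℤ)] at hshift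
  rw [sOut, card_filter_Icc_one_add _ (by positivity) (by positivity), hshift,
    ← card_filter_Ioc_two_pow_ite_even (zero_add _).symm v hy hz, tournamentOutDegree]
  congr 2 <;> refine filter_congr fun u hu => ?_ <;> rw [mem_Ioc] at hu
  · rw [stockEdge_of_lt_of_le hv.1 hu.2, add_comm]
  · rw [stockEdge_of_lt_of_lt hv.1 (by omega), ← dominates_add_right_iff (2 ^ (k + 1)) (j := u),
      sub_add_cancel]

lemma sTally_of_mem_low (hw : w ≤ 1) (hx : x ≤ 1) (hy : y ≤ 1) (hz : z ≤ 1) {v : ℤ}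
    (hv : v ∈ Ioc 0 (2 ^ (k + 1))) :
    sTally (k + 1) (l + 1) w x y z v =
      if v ≤ 2 ^ k then (2 ^ k + 2 ^ l * y + 2 ^ l * z - 1, 2 ^ k + 2 ^ l * w + 2 ^ l * x)
      else (2 ^ k + 2 ^ l * y + 2 ^ l * z, 2 ^ k + 2 ^ l * w + 2 ^ l * x - 1) := by
  have hk : 1 ≤ 2 ^ k := Nat.one_le_two_pow
  rw [sTally, sIn_of_mem_low hy hz hv, sOut_of_mem_low hw hx hv, tournamentInDegree_eq k hv,
    tournamentOutDegree_eq k hv]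
  split_ifs <;> congr 1 <;> omega

lemma sTally_of_mem_high (hw : w ≤ 1) (hx : x ≤ 1) (hy : y ≤ 1) (hz : z ≤ 1) {v : ℤ}
    (hv : v ∈ Ioc (2 ^ (k + 1)) (2 ^ (k + 1) + 2 ^ (l + 1))) :
    sTally (k + 1) (l + 1) w x y z v =
      if v - 2 ^ (k + 1) ≤ 2 ^ l then
        (2 ^ l + 2 ^ k * w + 2 ^ k * x - 1, 2 ^ l + 2 ^ k * y + 2 ^ k * z)
      else (2 ^ l + 2 ^ k * w + 2 ^ k * x, 2 ^ l + 2 ^ k * y + 2 ^ k * z - 1) := by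
  have hl : 1 ≤ 2 ^ l := Nat.one_le_two_pow
  have hshift : v - 2 ^ (k + 1) ∈ Ioc 0 (2 ^ (l + 1)) := by
    rw [mem_Ioc] at hv ⊢
    omega
  rw [sTally, sIn_of_mem_high hw hx hv, sOut_of_mem_high hy hz hv,
    tournamentInDegree_eq l hshift, tournamentOutDegree_eq l hshift]
  split_ifs <;> congr 1 <;> omega

end Degrees

theorem stmt_12 (m n w x y z : ℕ) (hn : 1 ≤ n) (hnm : n < m)
    (hw : w ≤ 1) (hx : x ≤ 1) (hy : y ≤ 1) (hz : z ≤ 1) :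
    (∀ v ∈ Finset.Icc (1 : ℤ) (2 ^ (m - 1)),
      sTally m n w x y z v =
        (2 ^ (m - 1) + 2 ^ (n - 1) * y + 2 ^ (n - 1) * z - 1,
         2 ^ (m - 1) + 2 ^ (n - 1) * w + 2 ^ (n - 1) * x)) ∧
    (∀ v ∈ Finset.Icc ((2 : ℤ) ^ (m - 1) + 1) (2 ^ m),
      sTally m n w x y z v =
        (2 ^ (m - 1) + 2 ^ (n - 1) * y + 2 ^ (n - 1) * z,
         2 ^ (m - 1) + 2 ^ (n - 1) * w + 2 ^ (n - 1) * x - 1)) ∧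
    (∀ v ∈ Finset.Icc ((2 : ℤ) ^ m + 1) (2 ^ m + 2 ^ (n - 1)),
      sTally m n w x y z v =
        (2 ^ (n - 1) + 2 ^ (m - 1) * w + 2 ^ (m - 1) * x - 1,
         2 ^ (n - 1) + 2 ^ (m - 1) * y + 2 ^ (m - 1) * z)) ∧
    (∀ v ∈ Finset.Icc ((2 : ℤ) ^ m + 2 ^ (n - 1) + 1) (2 ^ m + 2 ^ n),
      sTally m n w x y z v =
        (2 ^ (n - 1) + 2 ^ (m - 1) * w + 2 ^ (m - 1) * x,
         2 ^ (n - 1) + 2 ^ (m - 1) * y + 2 ^ (m - 1) * z - 1)) := by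
  obtain ⟨k, rfl⟩ : ∃ k, m = k + 1 := ⟨m - 1, by omega⟩
  obtain ⟨l, rfl⟩ : ∃ l, n = l + 1 := ⟨n - 1, by omega⟩
  simp only [Nat.add_sub_cancel]
  have hk : (2 : ℤ) ^ (k + 1) = 2 * 2 ^ k := pow_succ' 2 k
  have hl : (2 : ℤ) ^ (l + 1) = 2 * 2 ^ l := pow_succ' 2 l
  refine ⟨fun v hv => ?_, fun v hv => ?_, fun v hv => ?_, fun v hv => ?_⟩ <;> rw [mem_Icc] at hv
  · rw [sTally_of_mem_low hw hx hy hz (mem_Ioc.2 ⟨by omega, by omega⟩), if_pos hv.2]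
  · rw [sTally_of_mem_low hw hx hy hz (mem_Ioc.2 ⟨by omega, hv.2⟩), if_neg (by omega)]
  · rw [sTally_of_mem_high hw hx hy hz (mem_Ioc.2 ⟨by omega, by omega⟩), if_pos (by omega)]
  · rw [sTally_of_mem_high hw hx hy hz (mem_Ioc.2 ⟨by omega, hv.2⟩), if_neg (by omega)]
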